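/- arXiv:1702.00477 — 6 statements merged into one kernel-verified Lean document; each statement's English description precedes it below -/
import Mathlib

section
/- If p ∈ P is dominated by another point p' ∈ P (p' ≺ p), then D(P, Q) = D(P \ {p}, Q). Similarly, if q ∈ Q is dominated by another point of Q, or dominated by some point of P, then D(P, Q) = D(P, Q \ {q}). -/
open Finset

/-- A point in `ℝ^m`. -/
abbrev Pt (m : ℕ) := Fin m → ℝ

/-- `p` weakly dominates `q` (minimization): componentwise `≤`. -/
def wdom {m : ℕ} (p q : Pt m) : Prop := ∀ i, p i ≤ q i

/-- `p` dominates `q`: componentwise `≤` with at least one strict inequality. -/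
def sdom {m : ℕ} (p q : Pt m) : Prop := wdom p q ∧ ∃ i, p i < q i

/-- Set `P` weakly dominates set `Q`: every `q ∈ Q` is weakly dominated by some `p ∈ P`. -/
def setWDom {m : ℕ} (P Q : Finset (Pt m)) : Prop := ∀ q ∈ Q, ∃ p ∈ P, wdom p q

/-- L1 (Manhattan) distance between points. -/
noncomputable def l1 {m : ℕ} (p q : Pt m) : ℝ := ∑ j, |p j - q j|

/-- The dominance move `D(P,Q)`: the minimum total L1 move distance of points of `P`
(each `p` moved to `f p`) so that the moved set weakly dominates `Q`. -/
noncomputable def DoM {m : ℕ} (P Q : Finset (Pt m)) : ℝ :=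
  sInf { c | ∃ f : Pt m → Pt m, setWDom (P.image f) Q ∧ c = ∑ p ∈ P, l1 p (f p) }

/-- `d(p, S)`: the minimum L1 move of `p` needed to weakly dominate all of `S`,
namely `Σ_j (p^j − min({p^j} ∪ {s^j : s ∈ S}))`. -/
noncomputable def dCost {m : ℕ} (p : Pt m) (S : Finset (Pt m)) : ℝ :=
  ∑ j, (p j - (insert p S).inf' (insert_nonempty p S) (fun s => s j))

/-- `d(a, b)` between two points: `Σ_j (a^j − min(a^j, b^j))`. -/
noncomputable def dpt {m : ℕ} (a b : Pt m) : ℝ := ∑ j, (a j - min (a j) (b j))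

/-- `b` is an inward neighbor of `q` in `R`: `b ∈ R \ {q}` minimizes `d(·, q)`. -/
def isNb {m : ℕ} (R : Finset (Pt m)) (q b : Pt m) : Prop :=
  b ∈ R.erase q ∧ ∀ r ∈ R.erase q, dpt b q ≤ dpt r q

/-- The union of the point-sets of a list of groups. -/
noncomputable def unionSnd {m : ℕ} (S : List (Pt m × Finset (Pt m))) : Finset (Pt m) :=
  S.foldr (fun g acc => g.2 ∪ acc) ∅

/-- `S` is a partition of `P` to `Q`: each group is a point of `P` together with
a subset of `Q`, and the subsets cover `Q`. -/
def IsPartition {m : ℕ} (P Q : Finset (Pt m)) (S : List (Pt m × Finset (Pt m))) : Prop :=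
  (∀ g ∈ S, g.1 ∈ P ∧ g.2 ⊆ Q) ∧ unionSnd S = Q

/-- Total cost of a partition: the sum of the group costs `d(p_s, Q_s)`. -/
noncomputable def pcost {m : ℕ} (S : List (Pt m × Finset (Pt m))) : ℝ :=
  (S.map (fun g => dCost g.1 g.2)).sum

/-!
Each removal is justified by converting moves of one instance into moves of the other without
increasing the total cost, in both directions, so the two sets of attainable costs are mutually
coinitial and have the same infimum. The only nontrivial conversion merges two targets by their
pointwise minimum: for `x ≤ y`, `|x - min a b| ≤ |x - a| + |y - b|`, so if `p' ≤ p`, moving `p'`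
to `f p' ⊓ f p` costs at most what moving both `p'` and `p` cost, and `p` can be dropped. For a
point `q ∈ Q` dominated by `p ∈ P`, moving `p` to `f p ⊓ q` covers `q` at no extra cost (take
`y = b = q`); a point `q` dominated by `q' ∈ Q` is covered by whatever covers `q'`.
-/

lemma abs_sub_min_le_add {x y a b : ℝ} (hxy : x ≤ y) : |x - min a b| ≤ |x - a| + |y - b| := by
  rcases le_total a b with h | h
  · rw [min_eq_left h]
    linarith [abs_nonneg (y - b)]
  · rw [min_eq_right h]
    rcases le_total x b with hxb | hbx
    · rw [abs_of_nonpos (by linarith)]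
      linarith [neg_abs_le (x - a), abs_nonneg (y - b)]
    · rw [abs_of_nonneg (by linarith)]
      linarith [le_abs_self (y - b), abs_nonneg (x - a)]

section

variable {m : ℕ}

lemma wdom_iff_le {p q : Pt m} : wdom p q ↔ p ≤ q := Iff.rfl

lemma sdom.ne {p q : Pt m} (h : sdom p q) : p ≠ q := by
  rintro rfl
  obtain ⟨i, hi⟩ := h.2
  exact lt_irrefl _ hi

lemma l1_self (p : Pt m) : l1 p p = 0 := by
  simp [l1]

lemma l1_inf_le {x y : Pt m} (h : wdom x y) (a b : Pt m) :
    l1 x (a ⊓ b) ≤ l1 x a + l1 y b := by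
  rw [l1, l1, l1, ← Finset.sum_add_distrib]
  exact Finset.sum_le_sum fun j _ => abs_sub_min_le_add (h j)

lemma setWDom.trans {A B C : Finset (Pt m)} (hAB : setWDom A B) (hBC : setWDom B C) :
    setWDom A C := fun c hc =>
  let ⟨b, hb, hbc⟩ := hBC c hc
  let ⟨a, ha, hab⟩ := hAB b hb
  ⟨a, ha, fun i => (hab i).trans (hbc i)⟩

lemma setWDom_of_subset {A B : Finset (Pt m)} (h : B ⊆ A) : setWDom A B := fun b hb =>
  ⟨b, h hb, fun _ => le_rfl⟩

lemma setWDom_insert {A B : Finset (Pt m)} {q : Pt m} (hq : ∃ a ∈ A, wdom a q)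
    (hB : setWDom A B) : setWDom A (insert q B) :=
  Finset.forall_mem_insert _ _ _ |>.mpr ⟨hq, hB⟩

lemma setWDom_image_update_inf (P : Finset (Pt m)) (f : Pt m → Pt m) (p t : Pt m) :
    setWDom (P.image (Function.update f p (f p ⊓ t))) (P.image f) := by
  intro y hy
  obtain ⟨s, hs, rfl⟩ := Finset.mem_image.mp hy
  refine ⟨Function.update f p (f p ⊓ t) s, Finset.mem_image_of_mem _ hs, ?_⟩
  rcases eq_or_ne s p with rfl | hsp
  · rw [Function.update_self]
    exact wdom_iff_le.mpr inf_le_left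
  · rw [Function.update_of_ne hsp]
    exact fun _ => le_rfl

lemma setWDom_image_erase {P : Finset (Pt m)} {g : Pt m → Pt m} {p p' : Pt m}
    (hp' : p' ∈ P.erase p) (h : wdom (g p') (g p)) :
    setWDom ((P.erase p).image g) (P.image g) := by
  intro y hy
  obtain ⟨s, hs, rfl⟩ := Finset.mem_image.mp hy
  rcases eq_or_ne s p with rfl | hsp
  · exact ⟨g p', Finset.mem_image_of_mem _ hp', h⟩
  · exact ⟨g s, Finset.mem_image_of_mem _ (Finset.mem_erase.mpr ⟨hsp, hs⟩), fun _ => le_rfl⟩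

noncomputable def moveCost (P : Finset (Pt m)) (f : Pt m → Pt m) : ℝ := ∑ p ∈ P, l1 p (f p)

lemma moveCost_eq_add_erase {P : Finset (Pt m)} {p : Pt m} (hp : p ∈ P) (f : Pt m → Pt m) :
    moveCost P f = l1 p (f p) + moveCost (P.erase p) f :=
  (Finset.add_sum_erase P _ hp).symm

lemma moveCost_update {P : Finset (Pt m)} {p : Pt m} (hp : p ∈ P) (f : Pt m → Pt m) (x : Pt m) :
    moveCost P (Function.update f p x) = l1 p x + moveCost (P.erase p) f := by
  rw [moveCost_eq_add_erase hp, Function.update_self]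
  congr 1
  exact Finset.sum_congr rfl fun s hs => by rw [Function.update_of_ne (Finset.ne_of_mem_erase hs)]

lemma DoM_eq_of_forall_exists_le {P P' Q Q' : Finset (Pt m)}
    (h : ∀ f, setWDom (P.image f) Q → ∃ g, setWDom (P'.image g) Q' ∧ moveCost P' g ≤ moveCost P f)
    (h' : ∀ g, setWDom (P'.image g) Q' → ∃ f, setWDom (P.image f) Q ∧ moveCost P f ≤ moveCost P' g) :
    DoM P Q = DoM P' Q' := by
  refine csInf_eq_csInf_of_forall_exists_le ?_ ?_
  · rintro c ⟨f, hf, rfl⟩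
    obtain ⟨g, hg, hle⟩ := h f hf
    exact ⟨_, ⟨g, hg, rfl⟩, hle⟩
  · rintro c ⟨g, hg, rfl⟩
    obtain ⟨f, hf, hle⟩ := h' g hg
    exact ⟨_, ⟨f, hf, rfl⟩, hle⟩

lemma DoM_eq_DoM_erase_left {P Q : Finset (Pt m)} {p p' : Pt m} (hp : p ∈ P) (hp' : p' ∈ P)
    (hne : p' ≠ p) (h : wdom p' p) : DoM P Q = DoM (P.erase p) Q := by
  have hp'e : p' ∈ P.erase p := Finset.mem_erase.mpr ⟨hne, hp'⟩
  refine DoM_eq_of_forall_exists_le (fun f hf => ?_) (fun g hg => ?_)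
  · set g := Function.update f p' (f p' ⊓ f p)
    have hgp : wdom (g p') (g p) := by
      simp only [g, Function.update_self, Function.update_of_ne hne.symm]
      exact wdom_iff_le.mpr inf_le_right
    refine ⟨g, (setWDom_image_erase hp'e hgp).trans
      ((setWDom_image_update_inf P f p' (f p)).trans hf), ?_⟩
    calc moveCost (P.erase p) g
        = l1 p' (f p' ⊓ f p) + moveCost ((P.erase p).erase p') f := moveCost_update hp'e f _
      _ ≤ l1 p' (f p') + l1 p (f p) + moveCost ((P.erase p).erase p') f := by
        gcongr; exact l1_inf_le h _ _
      _ = moveCost P f := by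
        rw [moveCost_eq_add_erase hp, moveCost_eq_add_erase hp'e]; ring
  · have hsub : (P.erase p).image g ⊆ P.image (Function.update g p p) := by
      intro y hy
      obtain ⟨s, hs, rfl⟩ := Finset.mem_image.mp hy
      exact Finset.mem_image.mpr ⟨s, Finset.mem_of_mem_erase hs,
        Function.update_of_ne (Finset.ne_of_mem_erase hs) _ _⟩
    refine ⟨Function.update g p p, (setWDom_of_subset hsub).trans hg, ?_⟩
    rw [moveCost_update hp, l1_self, zero_add]

lemma DoM_eq_DoM_erase_right_of_wdom_right {P Q : Finset (Pt m)} {q q' : Pt m} (hq : q ∈ Q)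
    (hq' : q' ∈ Q) (hne : q' ≠ q) (h : wdom q' q) : DoM P Q = DoM P (Q.erase q) := by
  refine DoM_eq_of_forall_exists_le
    (fun f hf => ⟨f, hf.trans (setWDom_of_subset (Q.erase_subset q)), le_rfl⟩)
    (fun f hf => ⟨f, ?_, le_rfl⟩)
  obtain ⟨a, ha, haq'⟩ := hf q' (Finset.mem_erase.mpr ⟨hne, hq'⟩)
  rw [← Finset.insert_erase hq]
  exact setWDom_insert ⟨a, ha, fun i => (haq' i).trans (h i)⟩ hf

lemma DoM_eq_DoM_erase_right_of_wdom_left {P Q : Finset (Pt m)} {q p : Pt m} (hq : q ∈ Q)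
    (hp : p ∈ P) (h : wdom p q) : DoM P Q = DoM P (Q.erase q) := by
  refine DoM_eq_of_forall_exists_le
    (fun f hf => ⟨f, hf.trans (setWDom_of_subset (Q.erase_subset q)), le_rfl⟩)
    (fun f hf => ?_)
  set g := Function.update f p (f p ⊓ q)
  have hgq : wdom (g p) q := by
    simp only [g, Function.update_self]
    exact wdom_iff_le.mpr inf_le_right
  refine ⟨g, ?_, ?_⟩
  · rw [← Finset.insert_erase hq]
    exact setWDom_insert ⟨g p, Finset.mem_image_of_mem _ hp, hgq⟩
      ((setWDom_image_update_inf P f p q).trans hf)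
  · calc moveCost P g = l1 p (f p ⊓ q) + moveCost (P.erase p) f := moveCost_update hp f _
      _ ≤ l1 p (f p) + l1 q q + moveCost (P.erase p) f := by
        gcongr; exact l1_inf_le h _ _
      _ = moveCost P f := by rw [l1_self, add_zero, moveCost_eq_add_erase hp]

end

theorem stmt3_general {m : ℕ} (P Q : Finset (Pt m)) :
    (∀ p ∈ P, (∃ p' ∈ P, sdom p' p) → DoM P Q = DoM (P.erase p) Q) ∧
    (∀ q ∈ Q, ((∃ q' ∈ Q, sdom q' q) ∨ (∃ p ∈ P, sdom p q)) →
      DoM P Q = DoM P (Q.erase q)) := by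
  refine ⟨fun p hp ⟨p', hp', hsd⟩ => DoM_eq_DoM_erase_left hp hp' hsd.ne hsd.1, ?_⟩
  rintro q hq (⟨q', hq', hsd⟩ | ⟨p, hp, hsd⟩)
  · exact DoM_eq_DoM_erase_right_of_wdom_right hq hq' hsd.ne hsd.1
  · exact DoM_eq_DoM_erase_right_of_wdom_left hq hp hsd.1

theorem stmt3 {m : ℕ} (P Q : Finset (Pt m)) (hP : P.Nonempty) (hQ : Q.Nonempty) :
    (∀ p ∈ P, (∃ p' ∈ P, sdom p' p) → DoM P Q = DoM (P.erase p) Q) ∧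
    (∀ q ∈ Q, ((∃ q' ∈ Q, sdom q' q) ∨ (∃ p ∈ P, sdom p q)) →
      DoM P Q = DoM P (Q.erase q)) :=
  stmt3_general P Q
end

section
/- Decomposition of the single-point cover cost: for any point p ∈ R^m and finite sets Q_s, Q_t ⊂ R^m, d(p, Q_s ∪ Q_t) = d(p, Q_s) + d(I_{Q_s ∪ {p}}, Q_t), where I_{Q_s ∪ {p}} is the componentwise minimum (ideal point) of Q_s ∪ {p}. -/
open Finset

/-! In every coordinate, the minimum over `{p} ∪ Qs ∪ Qt` is the minimum over `{I} ∪ Qt`, where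
`I` is the ideal point of `{p} ∪ Qs`; so each summand `p j - min` telescopes through `I j`.
The ideal point is the infimum `(insert p Qs).inf' _ id` in the pointwise order on `Pt m`. -/

theorem Finset.inf'_insert_union_eq_inf'_insert_inf' {α : Type*} [SemilatticeInf α] [DecidableEq α]
    (a : α) (s t : Finset α) :
    (insert a (s ∪ t)).inf' (insert_nonempty a _) id
      = (insert ((insert a s).inf' (insert_nonempty a s) id) t).inf' (insert_nonempty _ t) id := by
  refine le_antisymm ((le_inf'_iff _ _).2 fun b hb => ?_) ((le_inf'_iff _ _).2 fun b hb => ?_)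
  · rcases mem_insert.1 hb with rfl | hbt
    · exact (le_inf'_iff _ _).2 fun c hc =>
        inf'_le id (mem_insert.2 ((mem_insert.1 hc).imp id (mem_union_left t)))
    · exact inf'_le id (mem_insert_of_mem (mem_union_right s hbt))
  · rcases mem_union.1 (insert_union a s t ▸ hb) with hbs | hbt
    · exact (inf'_le id (mem_insert_self _ t)).trans (inf'_le id hbs)
    · exact inf'_le id (mem_insert_of_mem hbt)

theorem dCost_eq_sum_sub_inf' {m : ℕ} (p : Pt m) (S : Finset (Pt m)) :
    dCost p S = ∑ j, (p j - (insert p S).inf' (insert_nonempty p S) id j) := by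
  simp only [dCost, Finset.inf'_apply, id]

theorem stmt7 {m : ℕ} (p : Pt m) (Qs Qt : Finset (Pt m)) :
    dCost p (Qs ∪ Qt)
      = dCost p Qs
        + dCost (fun j => (insert p Qs).inf' (insert_nonempty p Qs) (fun s => s j)) Qt := by
  have ideal_eq : (fun j => (insert p Qs).inf' (insert_nonempty p Qs) (fun s => s j))
      = (insert p Qs).inf' (insert_nonempty p Qs) id :=
    funext fun j => (Finset.inf'_apply _ _ j).symm
  rw [ideal_eq, dCost_eq_sum_sub_inf', dCost_eq_sum_sub_inf', dCost_eq_sum_sub_inf',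
    inf'_insert_union_eq_inf'_insert_inf', ← sum_add_distrib]
  exact sum_congr rfl fun j _ => by ring
end

section
/- Singleton-group optimality: let S* be an optimal (minimum-cost) partition of P to Q, and let ({p_s}, {q_s}) be a group of S* whose Q-part is a singleton {q_s}. Then p_s attains the minimum of d(p, {q_s}) over all p ∈ P, i.e., d(p_s, {q_s}) = min_{p ∈ P} d(p, {q_s}). -/
open Finset

/-! Replacing the point of one group by another point of `P` leaves a partition whose cost
changes only in that group's term, so in an optimal partition every group's point minimises
the cost of its group over `P`; a singleton group is the case `Q_s = {q_s}`. -/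

lemma unionSnd_cons {m : ℕ} (g : Pt m × Finset (Pt m)) (S : List (Pt m × Finset (Pt m))) :
    unionSnd (g :: S) = g.2 ∪ unionSnd S := rfl

lemma unionSnd_append {m : ℕ} (a b : List (Pt m × Finset (Pt m))) :
    unionSnd (a ++ b) = unionSnd a ∪ unionSnd b := by
  induction a with
  | nil => exact (empty_union _).symm
  | cons g t ih => rw [List.cons_append, unionSnd_cons, unionSnd_cons, ih, union_assoc]

lemma pcost_append_cons {m : ℕ} (S₁ S₂ : List (Pt m × Finset (Pt m))) (g : Pt m × Finset (Pt m)) :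
    pcost (S₁ ++ g :: S₂) = pcost S₁ + dCost g.1 g.2 + pcost S₂ := by
  simp [pcost, add_assoc]

lemma IsPartition.update_point {m : ℕ} {P Q : Finset (Pt m)} {S₁ S₂ : List (Pt m × Finset (Pt m))}
    {p p' : Pt m} {A : Finset (Pt m)} (hS : IsPartition P Q (S₁ ++ (p, A) :: S₂)) (hp' : p' ∈ P) :
    IsPartition P Q (S₁ ++ (p', A) :: S₂) := by
  obtain ⟨hgroups, hcover⟩ := hS
  refine ⟨fun g hg => ?_, by rwa [unionSnd_append, unionSnd_cons] at hcover ⊢⟩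
  rcases List.mem_append.1 hg with hg | hg
  · exact hgroups g (List.mem_append_left _ hg)
  rcases List.mem_cons.1 hg with rfl | hg
  · exact ⟨hp', (hgroups _ (List.mem_append_right _ List.mem_cons_self)).2⟩
  · exact hgroups g (List.mem_append_right _ (List.mem_cons_of_mem _ hg))

lemma dCost_le_of_optimal {m : ℕ} {P Q : Finset (Pt m)} {S : List (Pt m × Finset (Pt m))}
    (hS : IsPartition P Q S) (hopt : ∀ T, IsPartition P Q T → pcost S ≤ pcost T)
    {p p' : Pt m} {A : Finset (Pt m)} (hmem : (p, A) ∈ S) (hp' : p' ∈ P) :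
    dCost p A ≤ dCost p' A := by
  obtain ⟨S₁, S₂, rfl⟩ := List.append_of_mem hmem
  have hcost := hopt _ (hS.update_point hp')
  simp only [pcost_append_cons] at hcost
  linarith

theorem stmt11 {m : ℕ} (P Q : Finset (Pt m)) (hP : P.Nonempty)
    (S : List (Pt m × Finset (Pt m)))
    (hS : IsPartition P Q S)
    (hopt : ∀ T, IsPartition P Q T → pcost S ≤ pcost T)
    (ps qs : Pt m) (hmem : (ps, ({qs} : Finset (Pt m))) ∈ S) :
    dCost ps {qs} = P.inf' hP (fun p => dCost p {qs}) :=
  le_antisymm (le_inf' hP _ fun _ hp => dCost_le_of_optimal hS hopt hmem hp)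
    (inf'_le _ (hS.1 _ hmem).1)
end

section
/- No long inward-neighbor cycles in 2D: let R be a finite set of pairwise nondominated points in R^2 and q_1, ..., q_n (n ≥ 3) distinct points of R sorted increasingly by the first coordinate (hence decreasingly by the second). Then these points cannot form a directed cycle under the inward-neighbor relation; concretely, if q_2 is the inward neighbor of q_1 (i.e., q_2 = argmin_{r ∈ R\{q_1}} d(r, q_1)), then q_1 is not the inward neighbor of q_n, because d(q_2, q_n) < d(q_1, q_n). -/
open Finset

/-! If `a` lies weakly left of and above `c`, weakly dominating `c` only requires moving `a`
down, so `d(a, c) = a² - c²`. Hence `d(q_i, q_n) = q_i² - q_n²` for `i < n`, which decreases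
strictly in `i`. -/

theorem dpt_eq_sub_of_le_of_le {a c : Pt 2} (h0 : a 0 ≤ c 0) (h1 : c 1 ≤ a 1) :
    dpt a c = a 1 - c 1 := by
  simp only [dpt, Fin.sum_univ_two, min_eq_left h0, min_eq_right h1]
  ring

theorem stmt13 (n : ℕ) (hn : 3 ≤ n) (q : Fin n → Pt 2)
    (h1 : StrictMono (fun i => q i 0))
    (h2 : StrictAnti (fun i => q i 1)) :
    dpt (q ⟨1, by omega⟩) (q ⟨n - 1, by omega⟩)
      < dpt (q ⟨0, by omega⟩) (q ⟨n - 1, by omega⟩) := by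
  have h01 : (⟨0, by omega⟩ : Fin n) < ⟨1, by omega⟩ := Fin.mk_lt_mk.2 (by omega)
  have h0n : (⟨0, by omega⟩ : Fin n) < ⟨n - 1, by omega⟩ := Fin.mk_lt_mk.2 (by omega)
  have h1n : (⟨1, by omega⟩ : Fin n) < ⟨n - 1, by omega⟩ := Fin.mk_lt_mk.2 (by omega)
  rw [dpt_eq_sub_of_le_of_le (h1 h1n).le (h2 h1n).le,
    dpt_eq_sub_of_le_of_le (h1 h0n).le (h2 h0n).le]
  exact sub_lt_sub_right (h2 h01) _
end

section
/- Inward-neighbor grouping yields a valid partition (2D): let P and Q be finite sets of points in R^2 such that P ∪ Q contains no dominated points (and no point of Q is weakly dominated by a point of P). Form groups by placing each q ∈ Q together with its inward neighbor in P ∪ Q (merging groups that share points). If no two points of Q are mutual inward neighbors, then every resulting group contains exactly one point of P. -/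
open Finset

/-! Points of an antichain in the plane, sorted by first coordinate, have decreasing second
coordinates. If `b` is an inward neighbour of `q`, no other point lies strictly between `b` and `q`
in this order, since it would be strictly closer to `q`. So the orbit `q, nb q, nb² q, …` walks
between adjacent points of the sorted order, and since it never steps straight back (no mutual
neighbours in `Q`) it walks monotonically; in the finite set `Q` it must therefore reach `P`.
The group of `r` then contains the first point of `P` on the orbit of `r` and no other one,
because `P` and `Q` are disjoint and only points of `Q` have an outgoing edge. -/

open Set Function OrderDual

section Betweenness

variable {β : Type*} [LinearOrder β]

lemma mem_uIoo_of_notMem_uIoo {a b c : β} (hab : a ≠ b) (hbc : b ≠ c) (hac : a ≠ c)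
    (hc : c ∉ uIoo b a) (ha : a ∉ uIoo c b) : b ∈ uIoo a c := by
  rcases lt_or_gt_of_ne hab with h1 | h1 <;> rcases lt_or_gt_of_ne hbc with h2 | h2 <;>
    rcases lt_or_gt_of_ne hac with h3 | h3 <;> simp_all [uIoo_of_lt, uIoo_of_gt] <;> order

lemma lt_of_mem_uIoo_of_lt {a b c : β} (hb : b ∈ uIoo a c) (hab : a < b) : b < c := by
  rcases le_total a c with h | h
  · rw [uIoo_of_le h] at hb
    exact hb.2
  · rw [uIoo_of_ge h] at hb
    exact absurd hab (lt_asymm hb.2)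

lemma strictMono_of_mem_uIoo {x : ℕ → β} (hx : ∀ k, x (k + 1) ∈ uIoo (x k) (x (k + 2)))
    (h0 : x 0 < x 1) : StrictMono x := by
  refine strictMono_nat_of_lt_succ fun k => ?_
  induction k with
  | zero => exact h0
  | succ k ih => exact lt_of_mem_uIoo_of_lt (hx k) ih

lemma injective_of_mem_uIoo {x : ℕ → β} (hx : ∀ k, x (k + 1) ∈ uIoo (x k) (x (k + 2))) :
    Injective x := by
  rcases lt_or_gt_of_ne (ne_of_mem_of_not_mem (hx 0) left_notMem_uIoo).symm with h0 | h0
  · exact (strictMono_of_mem_uIoo hx h0).injective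
  · exact (strictMono_of_mem_uIoo (x := toDual ∘ x) (by simpa using hx) h0).injective.of_comp

end Betweenness

section Groups

variable {α : Type*} (P Q : Set α) (f : α → α)

def NbAdj (a b : α) : Prop := (a ∈ Q ∧ b = f a) ∨ (b ∈ Q ∧ a = f b)

open Classical in
noncomputable def firstHit (x : α) : α :=
  if h : ∃ n, f^[n] x ∈ P then f^[Nat.find h] x else x

variable {P Q f}

lemma firstHit_mem {x : α} (h : ∃ n, f^[n] x ∈ P) : firstHit P f x ∈ P := by
  classical
  rw [firstHit, dif_pos h]
  exact Nat.find_spec h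

lemma firstHit_of_mem {x : α} (hx : x ∈ P) : firstHit P f x = x := by
  classical
  have h : ∃ n, f^[n] x ∈ P := ⟨0, hx⟩
  rw [firstHit, dif_pos h, (Nat.find_eq_zero h).2 hx, iterate_zero_apply]

lemma firstHit_of_notMem {x : α} (hx : x ∉ P) (h : ∃ n, f^[n] x ∈ P) :
    firstHit P f x = firstHit P f (f x) := by
  classical
  have h' : ∃ n, f^[n] (f x) ∈ P := by
    obtain ⟨_ | n, hn⟩ := h
    exacts [absurd hn hx, ⟨n, hn⟩]
  rw [firstHit, dif_pos h, firstHit, dif_pos h', Nat.find_comp_succ h h' hx]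
  rfl

lemma reflTransGen_firstHit (hmaps : MapsTo f Q (P ∪ Q)) :
    ∀ n, ∀ x ∈ P ∪ Q, f^[n] x ∈ P →
      Relation.ReflTransGen (NbAdj Q f) x (firstHit P f x) := by
  intro n
  induction n with
  | zero => intro x _ hx; rw [firstHit_of_mem (f := f) (x := x) hx]
  | succ n ih =>
    intro x hx hn
    by_cases hxP : x ∈ P
    · rw [firstHit_of_mem hxP]
    have hxQ : x ∈ Q := hx.resolve_left hxP
    rw [firstHit_of_notMem hxP ⟨n + 1, hn⟩]
    exact .head (Or.inl ⟨hxQ, rfl⟩) (ih (f x) (hmaps hxQ) hn)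

variable (hdisj : Disjoint P Q) (hreach : ∀ q ∈ Q, ∃ n, f^[n] q ∈ P)
include hdisj hreach

lemma firstHit_eq_of_nbAdj {a b : α} (h : NbAdj Q f a b) : firstHit P f a = firstHit P f b := by
  rcases h with ⟨ha, rfl⟩ | ⟨hb, rfl⟩
  · exact firstHit_of_notMem (hdisj.notMem_of_mem_right ha) (hreach a ha)
  · exact (firstHit_of_notMem (hdisj.notMem_of_mem_right hb) (hreach b hb)).symm

lemma firstHit_eq_of_reflTransGen {a b : α} (h : Relation.ReflTransGen (NbAdj Q f) a b) :
    firstHit P f a = firstHit P f b := by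
  induction h with
  | refl => rfl
  | tail _ hbc ih => exact ih.trans (firstHit_eq_of_nbAdj hdisj hreach hbc)

theorem existsUnique_reflTransGen_nbAdj (hmaps : MapsTo f Q (P ∪ Q)) :
    ∀ r ∈ P ∪ Q, ∃! p, p ∈ P ∧ Relation.ReflTransGen (NbAdj Q f) r p := by
  intro r hr
  obtain ⟨n, hn⟩ : ∃ n, f^[n] r ∈ P := hr.elim (fun h => ⟨0, h⟩) (hreach r)
  refine ⟨firstHit P f r,
    ⟨firstHit_mem ⟨n, hn⟩, reflTransGen_firstHit hmaps n r hr hn⟩, ?_⟩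
  rintro p ⟨hp, hrp⟩
  rw [firstHit_eq_of_reflTransGen hdisj hreach hrp, firstHit_of_mem hp]

end Groups

section Plane

variable {R : Finset (Pt 2)}

lemma coord_one_lt_of_coord_zero_lt (hR : IsAntichain sdom (R : Set (Pt 2))) {a b : Pt 2}
    (ha : a ∈ R) (hb : b ∈ R) (h : a 0 < b 0) : b 1 < a 1 := by
  by_contra! h1
  refine hR ha hb (ne_of_apply_ne (· 0) h.ne) ⟨fun i => ?_, 0, h⟩
  fin_cases i
  exacts [h.le, h1]

lemma injOn_coord_zero (hR : IsAntichain sdom (R : Set (Pt 2))) :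
    InjOn (fun a : Pt 2 => a 0) R := by
  intro a ha b hb h0
  by_contra hab
  have h1 : a 1 ≠ b 1 := fun h1 => hab (funext fun i => by fin_cases i <;> assumption)
  rcases lt_or_gt_of_ne h1 with h1 | h1
  · exact hR ha hb hab ⟨fun i => by fin_cases i <;> simp [h0.le, h1.le], 1, h1⟩
  · exact hR hb ha (Ne.symm hab) ⟨fun i => by fin_cases i <;> simp [h0.ge, h1.le], 1, h1⟩

lemma dpt_eq_coord_one_sub (a q : Pt 2) (h0 : a 0 ≤ q 0) (h1 : q 1 ≤ a 1) :
    dpt a q = a 1 - q 1 := by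
  simp [dpt, Fin.sum_univ_two, min_eq_left h0, min_eq_right h1]

lemma dpt_eq_coord_zero_sub (a q : Pt 2) (h0 : q 0 ≤ a 0) (h1 : a 1 ≤ q 1) :
    dpt a q = a 0 - q 0 := by
  simp [dpt, Fin.sum_univ_two, min_eq_right h0, min_eq_left h1]

lemma coord_zero_notMem_uIoo_of_isNb (hR : IsAntichain sdom (R : Set (Pt 2))) {q b r : Pt 2}
    (hq : q ∈ R) (hb : isNb R q b) (hr : r ∈ R.erase q) : r 0 ∉ uIoo (b 0) (q 0) := by
  have hbR := mem_of_mem_erase hb.1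
  have hrR := mem_of_mem_erase hr
  have hmin := hb.2 r hr
  rw [uIoo_eq_union]
  rintro (⟨hbr, hrq⟩ | ⟨hqr, hrb⟩)
  · have hbq := hbr.trans hrq
    rw [dpt_eq_coord_one_sub b q hbq.le (coord_one_lt_of_coord_zero_lt hR hbR hq hbq).le,
      dpt_eq_coord_one_sub r q hrq.le (coord_one_lt_of_coord_zero_lt hR hrR hq hrq).le] at hmin
    linarith [coord_one_lt_of_coord_zero_lt hR hbR hrR hbr]
  · have hqb := hqr.trans hrb
    rw [dpt_eq_coord_zero_sub b q hqb.le (coord_one_lt_of_coord_zero_lt hR hq hbR hqb).le,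
      dpt_eq_coord_zero_sub r q hqr.le (coord_one_lt_of_coord_zero_lt hR hq hrR hqr).le] at hmin
    linarith

lemma coord_zero_mem_uIoo_of_isNb (hR : IsAntichain sdom (R : Set (Pt 2))) {a b c : Pt 2}
    (ha : a ∈ R) (hab : isNb R a b) (hbc : isNb R b c) (hca : c ≠ a) :
    b 0 ∈ uIoo (a 0) (c 0) := by
  have hb := mem_of_mem_erase hab.1
  have hc := mem_of_mem_erase hbc.1
  have hba := ne_of_mem_erase hab.1
  have hcb := ne_of_mem_erase hbc.1
  refine mem_uIoo_of_notMem_uIoo ((injOn_coord_zero hR).ne ha hb hba.symm)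
    ((injOn_coord_zero hR).ne hb hc hcb.symm) ((injOn_coord_zero hR).ne ha hc hca.symm) ?_ ?_
  · exact coord_zero_notMem_uIoo_of_isNb hR ha hab (mem_erase.2 ⟨hca, hc⟩)
  · exact coord_zero_notMem_uIoo_of_isNb hR hb hbc (mem_erase.2 ⟨hba.symm, ha⟩)

end Plane

theorem exists_iterate_nb_mem (P Q : Finset (Pt 2)) (nb : Pt 2 → Pt 2)
    (hR : IsAntichain sdom ((P ∪ Q : Finset (Pt 2)) : Set (Pt 2)))
    (hnb : ∀ q ∈ Q, isNb (P ∪ Q) q (nb q))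
    (hnomutual : ∀ q1 ∈ Q, ∀ q2 ∈ Q, nb q1 = q2 → nb q2 ≠ q1)
    {q : Pt 2} (hq : q ∈ Q) : ∃ n, nb^[n] q ∈ P := by
  by_contra! hout
  have horbit : ∀ n, nb^[n] q ∈ Q := by
    intro n
    induction n with
    | zero => exact hq
    | succ n ih =>
      rw [iterate_succ_apply']
      exact (Finset.mem_union.1 (mem_of_mem_erase (hnb _ ih).1)).resolve_left
        (by simpa only [iterate_succ_apply'] using hout (n + 1))
  have hmid : ∀ k, (nb^[k + 1] q) 0 ∈ uIoo ((nb^[k] q) 0) ((nb^[k + 2] q) 0) := by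
    intro k
    simp only [iterate_succ_apply']
    exact coord_zero_mem_uIoo_of_isNb hR (Finset.mem_union_right _ (horbit k)) (hnb _ (horbit k))
      (by simpa only [iterate_succ_apply'] using hnb _ (horbit (k + 1)))
      (hnomutual _ (horbit k) _ (by simpa only [iterate_succ_apply'] using horbit (k + 1)) rfl)
  exact Q.finite_toSet.not_infinite <|
    infinite_of_injective_forall_mem
      ((injective_of_mem_uIoo hmid).of_comp (f := fun p : Pt 2 => p 0)) horbit

theorem stmt14 (P Q : Finset (Pt 2)) (nb : Pt 2 → Pt 2)
    (hnodom : ∀ a ∈ P ∪ Q, ∀ b ∈ P ∪ Q, a ≠ b → ¬ sdom a b)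
    (hPQ : ∀ p ∈ P, ∀ q ∈ Q, ¬ wdom p q)
    (hnb : ∀ q ∈ Q, isNb (P ∪ Q) q (nb q))
    (hnomutual : ∀ q1 ∈ Q, ∀ q2 ∈ Q, nb q1 = q2 → nb q2 ≠ q1) :
    ∀ r ∈ P ∪ Q, ∃! p, p ∈ P ∧
      Relation.ReflTransGen
        (fun a b => (a ∈ Q ∧ b = nb a) ∨ (b ∈ Q ∧ a = nb b)) r p := by
  have hdisj : Disjoint (P : Set (Pt 2)) Q :=
    Set.disjoint_left.2 fun p hp hq => hPQ p hp p hq fun _ => le_rfl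
  have hmaps : MapsTo nb Q (P ∪ Q : Set (Pt 2)) := fun q hq => by
    simpa using mem_of_mem_erase (hnb q hq).1
  intro r hr
  exact existsUnique_reflTransGen_nbAdj hdisj
    (fun q hq => exists_iterate_nb_mem P Q nb hnodom hnb hnomutual hq) hmaps r
    (by simpa using hr)
end

section
/- Merging mutual inward neighbors preserves neighbors (2D): let P, Q ⊂ R^2 be as above with q_1, q_2 ∈ Q mutual inward neighbors in P ∪ Q, q* their ideal point (componentwise minimum), and Q' = (Q \ {q_1, q_2}) ∪ {q*}. Then for every q ∈ Q with q ∉ {q_1, q_2}: d(q*, q) = min(d(q_1, q), d(q_2, q)); consequently, if the inward neighbor of q in P ∪ Q was q_1 or q_2, it becomes q* in P ∪ Q', and otherwise it is unchanged. -/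
open Finset

/-! With `q₁` above `q₂`, the ideal point is `q* = (q₁⁰, q₂¹)`. Points of `Q` are pairwise
incomparable, and since `q₁` and `q₂` are mutual inward neighbors no point lies strictly between
them, so every other `q ∈ Q` lies either above `q₁`, where `d(q*, q) = d(q₁, q)`, or below `q₂`,
where `d(q*, q) = d(q₂, q)`. As `q*` weakly dominates both, this value is
`min (d(q₁, q)) (d(q₂, q))`: `q*` is as close to `q` as the closer of `q₁`, `q₂`, and replacing
them by `q*` can only turn a neighbor among them into `q*`. -/

section General

variable {m : ℕ}

lemma sdom_of_wdom_of_ne {a b : Pt m} (hab : wdom a b) (hne : a ≠ b) : sdom a b := by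
  refine ⟨hab, ?_⟩
  by_contra! h
  exact hne (funext fun i => le_antisymm (hab i) (h i))

lemma dpt_self (a : Pt m) : dpt a a = 0 := by
  simp [dpt]

lemma dpt_eq_zero_iff {a b : Pt m} : dpt a b = 0 ↔ wdom a b := by
  rw [dpt, sum_eq_zero_iff_of_nonneg fun j _ => sub_nonneg.2 (min_le_left _ _)]
  simp [wdom, sub_eq_zero]

lemma dpt_le_dpt_of_wdom {a a' : Pt m} (h : wdom a a') (b : Pt m) : dpt a b ≤ dpt a' b := by
  refine sum_le_sum fun j _ => ?_
  have := h j
  rcases le_total (a j) (b j) with hab | hab <;> rcases le_total (a' j) (b j) with hab' | hab' <;>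
    simp only [min_eq_left, min_eq_right, hab, hab'] <;> linarith

lemma isNb_of_subset_insert {R R' : Finset (Pt m)} {q b b' c : Pt m} (hb : isNb R q b)
    (hb' : b' ∈ R'.erase q) (hR' : R' ⊆ insert c R) (hle_b : dpt b' q ≤ dpt b q)
    (hle_c : dpt b' q ≤ dpt c q) : isNb R' q b' := by
  refine ⟨hb', fun r hr => ?_⟩
  obtain ⟨hrq, hrR'⟩ := mem_erase.1 hr
  rcases mem_insert.1 (hR' hrR') with rfl | hrR
  · exact hle_c
  · exact hle_b.trans (hb.2 r (mem_erase.2 ⟨hrq, hrR⟩))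

lemma ne_of_dpt_eq_min {a b c q : Pt m} (ha : ¬ wdom a q) (hb : ¬ wdom b q)
    (h : dpt c q = min (dpt a q) (dpt b q)) : c ≠ q := by
  rintro rfl
  rw [dpt_self, eq_comm, min_eq_iff] at h
  rcases h with ⟨h, -⟩ | ⟨h, -⟩
  · exact ha (dpt_eq_zero_iff.1 h)
  · exact hb (dpt_eq_zero_iff.1 h)

end General

lemma not_wdom_iff {a b : Pt 2} : ¬ wdom a b ↔ b 0 < a 0 ∨ b 1 < a 1 := by
  simp [wdom, Fin.forall_fin_two, imp_iff_not_or]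

lemma dpt_two (a b : Pt 2) :
    dpt a b = (a 0 - min (a 0) (b 0)) + (a 1 - min (a 1) (b 1)) := by
  simp only [dpt, Fin.sum_univ_two]

lemma dpt_inf_eq_min {q₁ q₂ q : Pt 2} (h₁₂ : ¬ wdom q₁ q₂) (h₂₁ : ¬ wdom q₂ q₁)
    (hnb₁ : dpt q₂ q₁ ≤ dpt q q₁) (hnb₂ : dpt q₁ q₂ ≤ dpt q q₂) :
    dpt (fun j => min (q₁ j) (q₂ j)) q = min (dpt q₁ q) (dpt q₂ q) := by
  wlog h0 : q₁ 0 ≤ q₂ 0 generalizing q₁ q₂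
  · have hswap : (fun j => min (q₂ j) (q₁ j)) = fun j => min (q₁ j) (q₂ j) :=
      funext fun _ => min_comm _ _
    rw [min_comm, ← hswap]
    exact this h₂₁ h₁₂ hnb₂ hnb₁ (le_of_not_ge h0)
  have h1 : q₂ 1 < q₁ 1 := (not_wdom_iff.1 h₁₂).resolve_left h0.not_gt
  have h0' : q₁ 0 < q₂ 0 := (not_wdom_iff.1 h₂₁).resolve_right h1.not_gt
  refine le_antisymm (le_min (dpt_le_dpt_of_wdom (fun j => min_le_left _ _) q)
    (dpt_le_dpt_of_wdom (fun j => min_le_right _ _) q)) ?_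
  simp only [dpt_two, min_eq_left h0, min_eq_right h1.le]
  rcases le_or_gt (q₁ 1) (q 1) with hq1 | hq1
  · refine (min_le_left _ _).trans_eq ?_
    rw [min_eq_left hq1, min_eq_left (h1.le.trans hq1)]
    ring
  rcases le_or_gt (q₂ 0) (q 0) with hq0 | hq0
  · refine (min_le_right _ _).trans_eq ?_
    rw [min_eq_left hq0, min_eq_left (h0.trans hq0)]
    ring
  exfalso
  rw [dpt_two, dpt_two, min_eq_right h0, min_eq_left h1.le, min_eq_left hq1.le] at hnb₁
  rcases le_total (q 0) (q₁ 0) with hq | hq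
  · rw [min_eq_left hq] at hnb₁; linarith
  · rw [min_eq_right hq] at hnb₁; linarith

theorem stmt16 (P Q : Finset (Pt 2)) (q1 q2 : Pt 2)
    (hq1 : q1 ∈ Q) (hq2 : q2 ∈ Q) (hne : q1 ≠ q2)
    (hnodomQ : ∀ a ∈ Q, ∀ b ∈ Q, a ≠ b → ¬ sdom a b)
    (hmut1 : isNb (P ∪ Q) q1 q2) (hmut2 : isNb (P ∪ Q) q2 q1) :
    ∀ q ∈ Q, q ≠ q1 → q ≠ q2 →
      (dpt (fun j => min (q1 j) (q2 j)) q = min (dpt q1 q) (dpt q2 q)) ∧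
      ((isNb (P ∪ Q) q q1 ∨ isNb (P ∪ Q) q q2) →
        isNb (P ∪ insert (fun j => min (q1 j) (q2 j)) ((Q.erase q1).erase q2)) q
          (fun j => min (q1 j) (q2 j))) ∧
      (∀ a, a ≠ q1 → a ≠ q2 → isNb (P ∪ Q) q a →
        isNb (P ∪ insert (fun j => min (q1 j) (q2 j)) ((Q.erase q1).erase q2)) q a) := by
  intro q hq hq1' hq2'
  set qs : Pt 2 := fun j => min (q1 j) (q2 j)
  have hnwdom : ∀ a ∈ Q, ∀ b ∈ Q, a ≠ b → ¬ wdom a b := fun a ha b hb hab hw =>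
    hnodomQ a ha b hb hab (sdom_of_wdom_of_ne hw hab)
  have hmem : ∀ {r s}, r ∈ Q → r ≠ s → r ∈ (P ∪ Q).erase s := fun hr hrs =>
    mem_erase.2 ⟨hrs, mem_union_right _ hr⟩
  have hdist : dpt qs q = min (dpt q1 q) (dpt q2 q) :=
    dpt_inf_eq_min (hnwdom _ hq1 _ hq2 hne) (hnwdom _ hq2 _ hq1 hne.symm)
      (hmut1.2 q (hmem hq hq1')) (hmut2.2 q (hmem hq hq2'))
  have hqs : qs ≠ q :=
    ne_of_dpt_eq_min (hnwdom _ hq1 _ hq hq1'.symm) (hnwdom _ hq2 _ hq hq2'.symm) hdist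
  have hsub : P ∪ insert qs ((Q.erase q1).erase q2) ⊆ insert qs (P ∪ Q) := by
    rw [union_insert]
    exact insert_subset_insert _
      (union_subset_union_right ((erase_subset _ _).trans (erase_subset _ _)))
  refine ⟨hdist, ?_, ?_⟩
  · have hqs_mem : qs ∈ (P ∪ insert qs ((Q.erase q1).erase q2)).erase q := by simp [hqs]
    rintro (h | h)
    · exact isNb_of_subset_insert h hqs_mem hsub (hdist ▸ min_le_left _ _) le_rfl
    · exact isNb_of_subset_insert h hqs_mem hsub (hdist ▸ min_le_right _ _) le_rfl
  · intro a ha1 ha2 ha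
    obtain ⟨haq, haPQ⟩ := mem_erase.1 ha.1
    have ha_mem : a ∈ (P ∪ insert qs ((Q.erase q1).erase q2)).erase q := by
      simp only [mem_erase, mem_union, mem_insert] at haPQ ⊢; tauto
    exact isNb_of_subset_insert ha ha_mem hsub le_rfl
      (hdist ▸ le_min (ha.2 q1 (hmem hq1 hq1'.symm)) (ha.2 q2 (hmem hq2 hq2'.symm)))
end
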